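/- arXiv:2302.05833 — 5 statements merged into one kernel-verified Lean document; each statement's English description precedes it below -/
import Mathlib

section
/- Generalized Pythagorean identity for Bregman divergences: let x_p ∈ X, a ∈ ℝ^d, b ∈ ℝ^d, and define x_t = x_p + t·a (a primal geodesic) and y_t = y_p + t·b with y_p = DΩ(x_p) (a dual geodesic, expressed in dual coordinates). Then for all t with the curves remaining in their domains, B(x_t's point, base) + B(base's point, y_t's point) - B(x_t's point, y_t's point) = t²·⟨a, b⟩, where B(p,q) = Ω(x_p) + Ω*(y_q) - ⟨x_p, y_q⟩. -/
open scoped RealInnerProductSpace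
noncomputable section

/-- The Bregman divergence of `Ω`. -/
def breg {d : ℕ} (Ω : EuclideanSpace ℝ (Fin d) → ℝ)
    (x x' : EuclideanSpace ℝ (Fin d)) : ℝ :=
  Ω x - Ω x' - ⟪gradient Ω x', x - x'⟫

/-- A regular Bregman generator: smooth, positive definite Hessian, convex gradient range,
on an open convex domain. -/
structure IsRegBregman {d : ℕ} (X : Set (EuclideanSpace ℝ (Fin d)))
    (Ω : EuclideanSpace ℝ (Fin d) → ℝ) : Prop where
  isOpen : IsOpen X
  convex : Convex ℝ X
  smooth : ContDiffOn ℝ (⊤ : ℕ∞) Ω X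
  hessPos : ∀ x ∈ X, ∀ v : EuclideanSpace ℝ (Fin d), v ≠ 0 →
    0 < ⟪fderiv ℝ (gradient Ω) x v, v⟫
  rangeConvex : Convex ℝ (gradient Ω '' X)


/-- generalized Pythagorean identity for Bregman divergences.  With
`B(p, q) = Ω x_p + Ω* y_q - ⟪x_p, y_q⟫`, a primal geodesic `x_t = x_p + t • a` and a dual
geodesic `y_t = y_p + t • b` (with `y_p = DΩ x_p`) emanating from the same point, one has
`B(γ_t, p) + B(p, σ_t) - B(γ_t, σ_t) = t² ⟪a, b⟫`. -/
theorem bregman_pythagorean_identity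
    {d : ℕ} {X : Set (EuclideanSpace ℝ (Fin d))} {Ω Ωs : EuclideanSpace ℝ (Fin d) → ℝ}
    (hΩ : IsRegBregman X Ω)
    (hFen : ∀ x ∈ X, Ω x + Ωs (gradient Ω x) = ⟪x, gradient Ω x⟫)
    (xp a b : EuclideanSpace ℝ (Fin d)) (hxp : xp ∈ X) (t : ℝ)
    (hxt : xp + t • a ∈ X) (hyt : gradient Ω xp + t • b ∈ gradient Ω '' X) :
    (Ω (xp + t • a) + Ωs (gradient Ω xp) - ⟪xp + t • a, gradient Ω xp⟫)
      + (Ω xp + Ωs (gradient Ω xp + t • b) - ⟪xp, gradient Ω xp + t • b⟫)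
      - (Ω (xp + t • a) + Ωs (gradient Ω xp + t • b) - ⟪xp + t • a, gradient Ω xp + t • b⟫)
      = t ^ 2 * ⟪a, b⟫ := by
  have h := hFen xp hxp
  simp only [inner_add_left, inner_add_right, real_inner_smul_left, real_inner_smul_right] at *
  nlinarith [h]
end
end

section
/- Generalized Pythagorean theorem: if the primal geodesic γ_t (linear in x-coordinates with initial velocity a) and the dual geodesic σ_t (linear in y-coordinates with initial velocity b) emanate from the same point p and ⟨a, b⟩ = 0, then B(γ_t, p) + B(p, σ_t) = B(γ_t, σ_t) for all t ∈ [0,1]. -/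
open scoped RealInnerProductSpace
noncomputable section

/-- generalized Pythagorean theorem.  If the primal geodesic `γ_t`
(`x`-coordinates `x_p + t • a`) and the dual geodesic `σ_t` (`y`-coordinates `y_p + t • b`)
emanate from the same point `p` and `⟪a, b⟫ = 0`, then
`B(γ_t, p) + B(p, σ_t) = B(γ_t, σ_t)` for all `t ∈ [0,1]`. -/
theorem bregman_pythagorean_theorem
    {d : ℕ} {X : Set (EuclideanSpace ℝ (Fin d))} {Ω Ωs : EuclideanSpace ℝ (Fin d) → ℝ}
    (hΩ : IsRegBregman X Ω)
    (hFen : ∀ x ∈ X, Ω x + Ωs (gradient Ω x) = ⟪x, gradient Ω x⟫)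
    (xp a b : EuclideanSpace ℝ (Fin d)) (hxp : xp ∈ X)
    (hab : ⟪a, b⟫ = 0) (t : ℝ) (ht : t ∈ Set.Icc (0 : ℝ) 1)
    (hxt : xp + t • a ∈ X) (hyt : gradient Ω xp + t • b ∈ gradient Ω '' X) :
    (Ω (xp + t • a) + Ωs (gradient Ω xp) - ⟪xp + t • a, gradient Ω xp⟫)
      + (Ω xp + Ωs (gradient Ω xp + t • b) - ⟪xp, gradient Ω xp + t • b⟫)
      = Ω (xp + t • a) + Ωs (gradient Ω xp + t • b)
        - ⟪xp + t • a, gradient Ω xp + t • b⟫ := by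
  have hF := hFen xp hxp
  simp only [inner_add_right, inner_add_left, real_inner_smul_left, real_inner_smul_right,
    real_inner_comm a (gradient Ω xp), hab, mul_zero] at *
  linarith [hF]
end
end

section
/- Duality of the Bregman-Wasserstein divergence: for probability measures μ₀, μ₁ on X and their pushforwards ν₀ = (DΩ)_# μ₀, ν₁ = (DΩ)_# μ₁ on Y, one has 𝓑_Ω(μ₀, μ₁) = 𝓑_{Ω*}(ν₁, ν₀), i.e., the optimal transport cost for B_Ω from μ₀ to μ₁ equals the optimal transport cost for B_{Ω*} from ν₁ to ν₀. -/
open scoped RealInnerProductSpace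
noncomputable section

open scoped RealInnerProductSpace ENNReal
open MeasureTheory

/-- The set of couplings of two measures. -/
def Couplings {d : ℕ} (μ₀ μ₁ : Measure (EuclideanSpace ℝ (Fin d))) :
    Set (Measure (EuclideanSpace ℝ (Fin d) × EuclideanSpace ℝ (Fin d))) :=
  {π | π.map Prod.fst = μ₀ ∧ π.map Prod.snd = μ₁}

/-- Optimal transport cost (ENNReal-valued, via lower integrals). -/
def transportCostL {d : ℕ} (c : EuclideanSpace ℝ (Fin d) → EuclideanSpace ℝ (Fin d) → ℝ≥0∞)
    (μ₀ μ₁ : Measure (EuclideanSpace ℝ (Fin d))) : ℝ≥0∞ :=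
  ⨅ π ∈ Couplings μ₀ μ₁, ∫⁻ p, c p.1 p.2 ∂π

/-- Optimal transport cost (real-valued, via Bochner integrals). -/
def transportCost {d : ℕ} (c : EuclideanSpace ℝ (Fin d) → EuclideanSpace ℝ (Fin d) → ℝ)
    (μ₀ μ₁ : Measure (EuclideanSpace ℝ (Fin d))) : ℝ :=
  sInf ((fun π => ∫ p, c p.1 p.2 ∂π) '' Couplings μ₀ μ₁)

/-- The gradient of any function is Borel measurable. -/
lemma measurable_gradient' {d : ℕ} (f : EuclideanSpace ℝ (Fin d) → ℝ) :
    Measurable (gradient f) :=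
  (InnerProductSpace.toDual ℝ
    (EuclideanSpace ℝ (Fin d))).symm.continuous.measurable.comp (measurable_fderiv ℝ f)

/-- The self-dual representation of the Bregman divergence. -/
lemma breg_dual' {d : ℕ} {X : Set (EuclideanSpace ℝ (Fin d))}
    {Ω Ωs : EuclideanSpace ℝ (Fin d) → ℝ}
    (hFen : ∀ x ∈ X, Ω x + Ωs (gradient Ω x) = ⟪x, gradient Ω x⟫)
    (hInv : ∀ x ∈ X, gradient Ωs (gradient Ω x) = x)
    {x x' : EuclideanSpace ℝ (Fin d)} (hx : x ∈ X) (hx' : x' ∈ X) :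
    breg Ω x x' = breg Ωs (gradient Ω x') (gradient Ω x) := by
  have h1 := hFen x hx
  have h2 := hFen x' hx'
  have e1 : ⟪gradient Ω x', x - x'⟫ = ⟪x, gradient Ω x'⟫ - ⟪x', gradient Ω x'⟫ := by
    rw [inner_sub_right, real_inner_comm (gradient Ω x') x, real_inner_comm (gradient Ω x') x']
  have e2 : ⟪gradient Ωs (gradient Ω x), gradient Ω x' - gradient Ω x⟫
      = ⟪x, gradient Ω x'⟫ - ⟪x, gradient Ω x⟫ := by
    rw [hInv x hx, inner_sub_right]
  simp only [breg, e1, e2]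
  linarith

/-- duality of the Bregman–Wasserstein divergence: with
`ν_i = (DΩ)_# μ_i`, the optimal cost for `B_Ω` from `μ₀` to `μ₁` equals the optimal cost
for `B_{Ω*}` from `ν₁` to `ν₀`. -/
theorem bregmanWasserstein_duality
    {d : ℕ} {X : Set (EuclideanSpace ℝ (Fin d))} {Ω Ωs : EuclideanSpace ℝ (Fin d) → ℝ}
    (hΩ : IsRegBregman X Ω)
    (hFen : ∀ x ∈ X, Ω x + Ωs (gradient Ω x) = ⟪x, gradient Ω x⟫)
    (hInv : ∀ x ∈ X, gradient Ωs (gradient Ω x) = x)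
    (μ₀ μ₁ : Measure (EuclideanSpace ℝ (Fin d)))
    [IsProbabilityMeasure μ₀] [IsProbabilityMeasure μ₁]
    (hμ₀ : μ₀ Xᶜ = 0) (hμ₁ : μ₁ Xᶜ = 0) :
    transportCostL (fun x x' => ENNReal.ofReal (breg Ω x x')) μ₀ μ₁
      = transportCostL (fun y' y => ENNReal.ofReal (breg Ωs y' y))
          (μ₁.map (gradient Ω)) (μ₀.map (gradient Ω)) := by
  classical
  set g : EuclideanSpace ℝ (Fin d) → EuclideanSpace ℝ (Fin d) := gradient Ω with hg_def
  set gs : EuclideanSpace ℝ (Fin d) → EuclideanSpace ℝ (Fin d) := gradient Ωs with hgs_def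
  have hg : Measurable g := measurable_gradient' Ω
  have hgs : Measurable gs := measurable_gradient' Ωs
  have hXopen : IsOpen X := hΩ.isOpen
  have hXm : MeasurableSet X := hXopen.measurableSet
  -- cost functions
  set c : (EuclideanSpace ℝ (Fin d) × EuclideanSpace ℝ (Fin d)) → ℝ≥0∞ := fun p => ENNReal.ofReal (breg Ω p.1 p.2) with hc_def
  set c' : (EuclideanSpace ℝ (Fin d) × EuclideanSpace ℝ (Fin d)) → ℝ≥0∞ := fun p => ENNReal.ofReal (breg Ωs p.1 p.2) with hc'_def
  -- continuity of Ω and g on X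
  have hΩc : ContinuousOn Ω X := hΩ.smooth.continuousOn
  have hgc : ContinuousOn g X := by
    have h1 : ContinuousOn (fderiv ℝ Ω) X :=
      hΩ.smooth.continuousOn_fderiv_of_isOpen hXopen (by simp)
    exact (InnerProductSpace.toDual ℝ (EuclideanSpace ℝ (Fin d))).symm.continuous.comp_continuousOn h1
  -- measurable proxy for the cost
  have hXXm : MeasurableSet (X ×ˢ X) := hXm.prod hXm
  have hcX : ContinuousOn c (X ×ˢ X) := by
    apply ENNReal.continuous_ofReal.comp_continuousOn
    have hf1 : ContinuousOn (fun p : (EuclideanSpace ℝ (Fin d) × EuclideanSpace ℝ (Fin d)) => Ω p.1) (X ×ˢ X) :=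
      hΩc.comp continuous_fst.continuousOn (fun p hp => hp.1)
    have hf2 : ContinuousOn (fun p : (EuclideanSpace ℝ (Fin d) × EuclideanSpace ℝ (Fin d)) => Ω p.2) (X ×ˢ X) :=
      hΩc.comp continuous_snd.continuousOn (fun p hp => hp.2)
    have hf3 : ContinuousOn (fun p : (EuclideanSpace ℝ (Fin d) × EuclideanSpace ℝ (Fin d)) => g p.2) (X ×ˢ X) :=
      hgc.comp continuous_snd.continuousOn (fun p hp => hp.2)
    have hf4 : ContinuousOn (fun p : (EuclideanSpace ℝ (Fin d) × EuclideanSpace ℝ (Fin d)) => p.1 - p.2) (X ×ˢ X) :=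
      (continuous_fst.sub continuous_snd).continuousOn
    exact (hf1.sub hf2).sub (hf3.inner hf4)
  set h : (EuclideanSpace ℝ (Fin d) × EuclideanSpace ℝ (Fin d)) → ℝ≥0∞ := (X ×ˢ X).piecewise c 0 with hh_def
  have hhm : Measurable h := hcX.measurable_piecewise continuousOn_const hXXm
  -- the set Q
  set Q : Set (EuclideanSpace ℝ (Fin d)) := gs ⁻¹' X ∩ {y | g (gs y) = y} with hQ_def
  have hQm : MeasurableSet Q :=
    (hgs hXm).inter (measurableSet_eq_fun (hg.comp hgs) measurable_id)
  have hXQ : ∀ x ∈ X, g x ∈ Q := by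
    intro x hx
    refine ⟨?_, ?_⟩
    · show gs (g x) ∈ X
      rw [show gs (g x) = x from hInv x hx]; exact hx
    · show g (gs (g x)) = g x
      rw [show gs (g x) = x from hInv x hx]
  -- maps S and T
  set S : EuclideanSpace ℝ (Fin d) × EuclideanSpace ℝ (Fin d) → EuclideanSpace ℝ (Fin d) × EuclideanSpace ℝ (Fin d) := fun p => (gs p.2, gs p.1) with hS_def
  set T : EuclideanSpace ℝ (Fin d) × EuclideanSpace ℝ (Fin d) → EuclideanSpace ℝ (Fin d) × EuclideanSpace ℝ (Fin d) := fun p => (g p.2, g p.1) with hT_def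
  have hS : Measurable S := (hgs.comp measurable_snd).prodMk (hgs.comp measurable_fst)
  have hT : Measurable T := (hg.comp measurable_snd).prodMk (hg.comp measurable_fst)
  -- almost everywhere in X × X for couplings of μ₀ μ₁
  have haeX : ∀ π ∈ Couplings μ₀ μ₁, ∀ᵐ p ∂π, p ∈ X ×ˢ X := by
    rintro π ⟨h1, h2⟩
    have e1 : π (Prod.fst ⁻¹' Xᶜ) = 0 := by
      rw [← Measure.map_apply measurable_fst hXm.compl, h1]; exact hμ₀
    have e2 : π (Prod.snd ⁻¹' Xᶜ) = 0 := by
      rw [← Measure.map_apply measurable_snd hXm.compl, h2]; exact hμ₁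
    have hsub : (X ×ˢ X)ᶜ ⊆ (Prod.fst ⁻¹' Xᶜ) ∪ (Prod.snd ⁻¹' Xᶜ) := by
      intro p hp
      by_cases h' : p.1 ∈ X
      · exact Or.inr fun hc => hp ⟨h', hc⟩
      · exact Or.inl h'
    have : π (X ×ˢ X)ᶜ = 0 := measure_mono_null hsub (measure_union_null e1 e2)
    exact ae_iff.2 this
  -- almost everywhere in Q × Q for couplings of ν₁ ν₀
  have hν₁ : (μ₁.map g) Qᶜ = 0 := by
    rw [Measure.map_apply hg hQm.compl]
    refine measure_mono_null ?_ hμ₁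
    intro x hx hxX
    exact hx (hXQ x hxX)
  have hν₀ : (μ₀.map g) Qᶜ = 0 := by
    rw [Measure.map_apply hg hQm.compl]
    refine measure_mono_null ?_ hμ₀
    intro x hx hxX
    exact hx (hXQ x hxX)
  have haeQ : ∀ π ∈ Couplings (μ₁.map g) (μ₀.map g), ∀ᵐ p ∂π, p ∈ Q ×ˢ Q := by
    rintro π ⟨h1, h2⟩
    have e1 : π (Prod.fst ⁻¹' Qᶜ) = 0 := by
      rw [← Measure.map_apply measurable_fst hQm.compl, h1]; exact hν₁
    have e2 : π (Prod.snd ⁻¹' Qᶜ) = 0 := by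
      rw [← Measure.map_apply measurable_snd hQm.compl, h2]; exact hν₀
    have hsub : (Q ×ˢ Q)ᶜ ⊆ (Prod.fst ⁻¹' Qᶜ) ∪ (Prod.snd ⁻¹' Qᶜ) := by
      intro p hp
      by_cases h' : p.1 ∈ Q
      · exact Or.inr fun hc => hp ⟨h', hc⟩
      · exact Or.inl h'
    have : π (Q ×ˢ Q)ᶜ = 0 := measure_mono_null hsub (measure_union_null e1 e2)
    exact ae_iff.2 this
  -- c = h a.e. for couplings of μ₀ μ₁
  have hch : ∀ π ∈ Couplings μ₀ μ₁, ∫⁻ p, c p ∂π = ∫⁻ p, h p ∂π := by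
    intro π hπ
    refine lintegral_congr_ae (((haeX π hπ)).mono fun p hp => ?_)
    exact (Set.piecewise_eq_of_mem _ _ _ hp).symm
  -- c' = h ∘ S a.e. for couplings of ν₁ ν₀
  have hc'hS : ∀ π ∈ Couplings (μ₁.map g) (μ₀.map g),
      ∫⁻ p, c' p ∂π = ∫⁻ p, h (S p) ∂π := by
    intro π hπ
    refine lintegral_congr_ae (((haeQ π hπ)).mono fun p hp => ?_)
    obtain ⟨⟨h1X, h1g⟩, ⟨h2X, h2g⟩⟩ := hp
    have hmem : S p ∈ X ×ˢ X := ⟨h2X, h1X⟩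
    have hval : h (S p) = c (S p) := Set.piecewise_eq_of_mem _ _ _ hmem
    show c' p = h (S p)
    rw [hval]
    show c' p = c (gs p.2, gs p.1)
    simp only [hc'_def, hc_def]
    congr 1
    have := breg_dual' hFen hInv h2X h1X
    rw [this]
    show breg Ωs p.1 p.2 = breg Ωs (g (gs p.1)) (g (gs p.2))
    rw [h1g, h2g]
  -- T maps couplings of μ₀ μ₁ to couplings of ν₁ ν₀
  have hTmap : ∀ π ∈ Couplings μ₀ μ₁, π.map T ∈ Couplings (μ₁.map g) (μ₀.map g) := by
    rintro π ⟨h1, h2⟩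
    constructor
    · rw [Measure.map_map measurable_fst hT]
      show π.map (fun p : (EuclideanSpace ℝ (Fin d) × EuclideanSpace ℝ (Fin d)) => g p.2) = μ₁.map g
      rw [show (fun p : (EuclideanSpace ℝ (Fin d) × EuclideanSpace ℝ (Fin d)) => g p.2) = g ∘ Prod.snd from rfl,
        ← Measure.map_map hg measurable_snd, h2]
    · rw [Measure.map_map measurable_snd hT]
      show π.map (fun p : (EuclideanSpace ℝ (Fin d) × EuclideanSpace ℝ (Fin d)) => g p.1) = μ₀.map g
      rw [show (fun p : (EuclideanSpace ℝ (Fin d) × EuclideanSpace ℝ (Fin d)) => g p.1) = g ∘ Prod.fst from rfl,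
        ← Measure.map_map hg measurable_fst, h1]
  -- S maps couplings of ν₁ ν₀ to couplings of μ₀ μ₁
  have haeμ₀ : ∀ᵐ x ∂μ₀, x ∈ X := ae_iff.2 (by simpa only [← Set.compl_def] using hμ₀)
  have haeμ₁ : ∀ᵐ x ∂μ₁, x ∈ X := ae_iff.2 (by simpa only [← Set.compl_def] using hμ₁)
  have hgsg₀ : (μ₀.map g).map gs = μ₀ := by
    rw [Measure.map_map hgs hg]
    have : μ₀.map (gs ∘ g) = μ₀.map id := by
      apply Measure.map_congr
      exact haeμ₀.mono fun x hx => hInv x hx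
    rw [this, Measure.map_id]
  have hgsg₁ : (μ₁.map g).map gs = μ₁ := by
    rw [Measure.map_map hgs hg]
    have : μ₁.map (gs ∘ g) = μ₁.map id := by
      apply Measure.map_congr
      exact haeμ₁.mono fun x hx => hInv x hx
    rw [this, Measure.map_id]
  have hSmap : ∀ π ∈ Couplings (μ₁.map g) (μ₀.map g), π.map S ∈ Couplings μ₀ μ₁ := by
    rintro π ⟨h1, h2⟩
    constructor
    · rw [Measure.map_map measurable_fst hS]
      show π.map (fun p : (EuclideanSpace ℝ (Fin d) × EuclideanSpace ℝ (Fin d)) => gs p.2) = μ₀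
      rw [show (fun p : (EuclideanSpace ℝ (Fin d) × EuclideanSpace ℝ (Fin d)) => gs p.2) = gs ∘ Prod.snd from rfl,
        ← Measure.map_map hgs measurable_snd, h2, hgsg₀]
    · rw [Measure.map_map measurable_snd hS]
      show π.map (fun p : (EuclideanSpace ℝ (Fin d) × EuclideanSpace ℝ (Fin d)) => gs p.1) = μ₁
      rw [show (fun p : (EuclideanSpace ℝ (Fin d) × EuclideanSpace ℝ (Fin d)) => gs p.1) = gs ∘ Prod.fst from rfl,
        ← Measure.map_map hgs measurable_fst, h1, hgsg₁]
  -- reduce the goal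
  show (⨅ π ∈ Couplings μ₀ μ₁, ∫⁻ p, c p ∂π)
      = ⨅ π ∈ Couplings (μ₁.map g) (μ₀.map g), ∫⁻ p, c' p ∂π
  apply le_antisymm
  · refine le_iInf₂ fun π' hπ' => ?_
    have hπ : π'.map S ∈ Couplings μ₀ μ₁ := hSmap π' hπ'
    refine iInf₂_le_of_le (π'.map S) hπ (le_of_eq ?_)
    rw [hch _ hπ, lintegral_map hhm hS, hc'hS _ hπ']
  · refine le_iInf₂ fun π hπ => ?_
    have hπ' : π.map T ∈ Couplings (μ₁.map g) (μ₀.map g) := hTmap π hπ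
    refine iInf₂_le_of_le (π.map T) hπ' (le_of_eq ?_)
    rw [hc'hS _ hπ', lintegral_map (f := fun p => h (S p)) (hhm.comp hS) hT, hch _ hπ]
    refine lintegral_congr_ae (((haeX π hπ)).mono fun p hp => ?_)
    have e : S (T p) = p := by
      show (gs (g p.1), gs (g p.2)) = p
      rw [hInv _ hp.1, hInv _ hp.2]
    show h (S (T p)) = h p
    rw [e]
end
end

section
/- Bregman-Wasserstein divergence as recentered Wasserstein distance: under integrability assumptions, 𝓑(μ₀, μ₁) = (1/2) W₂²(μ₀^X, μ₁^Y) + ∫_X (Ω(x) - |x|²/2) dμ₀^X(x) + ∫_Y (Ω*(y) - |y|²/2) dμ₁^Y(y), where μ₁^Y = (DΩ)_# μ₁^X. -/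
open scoped RealInnerProductSpace
noncomputable section

open scoped RealInnerProductSpace ENNReal
open scoped Pointwise
open MeasureTheory

/-- Bregman–Wasserstein divergence as a recentered Wasserstein distance:
`𝓑(μ₀, μ₁) = ½ W₂²(μ₀, ν₁) + ∫ (Ω - |·|²/2) dμ₀ + ∫ (Ω* - |·|²/2) dν₁`,
where `ν₁ = (DΩ)_# μ₁`. -/
theorem bregmanWasserstein_recentered
    {d : ℕ} {X : Set (EuclideanSpace ℝ (Fin d))} {Ω Ωs : EuclideanSpace ℝ (Fin d) → ℝ}
    (hΩ : IsRegBregman X Ω)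
    (hFen : ∀ x ∈ X, Ω x + Ωs (gradient Ω x) = ⟪x, gradient Ω x⟫)
    (hInv : ∀ x ∈ X, gradient Ωs (gradient Ω x) = x)
    (μ₀ μ₁ : Measure (EuclideanSpace ℝ (Fin d)))
    [IsProbabilityMeasure μ₀] [IsProbabilityMeasure μ₁]
    (hμ₀ : μ₀ Xᶜ = 0) (hμ₁ : μ₁ Xᶜ = 0)
    (hac : μ₀ ≪ volume)
    (hm₀ : Integrable (fun x => ‖x‖ ^ 2) μ₀)
    (hm₁ : Integrable (fun y => ‖y‖ ^ 2) (μ₁.map (gradient Ω)))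
    (hiΩ : Integrable Ω μ₀) (hiΩs : Integrable Ωs (μ₁.map (gradient Ω))) :
    transportCost (breg Ω) μ₀ μ₁
      = (1 / 2) * transportCost (fun x y => ‖x - y‖ ^ 2) μ₀ (μ₁.map (gradient Ω))
        + ∫ x, (Ω x - ‖x‖ ^ 2 / 2) ∂μ₀
        + ∫ y, (Ωs y - ‖y‖ ^ 2 / 2) ∂(μ₁.map (gradient Ω)) := by
  classical
  have hG : Measurable (gradient Ω) := by
    unfold gradient
    exact (LinearIsometryEquiv.continuous _).measurable.comp (measurable_fderiv ℝ Ω)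
  have hGs : Measurable (gradient Ωs) := by
    unfold gradient
    exact (LinearIsometryEquiv.continuous _).measurable.comp (measurable_fderiv ℝ Ωs)
  have hXm : MeasurableSet X := hΩ.isOpen.measurableSet
  set ν₁ : Measure (EuclideanSpace ℝ (Fin d)) := μ₁.map (gradient Ω) with hν₁def
  haveI : IsProbabilityMeasure ν₁ := Measure.isProbabilityMeasure_map hG.aemeasurable
  set f : (EuclideanSpace ℝ (Fin d)) → ℝ := fun x => Ω x - ‖x‖ ^ 2 / 2 with hfdef
  set g : (EuclideanSpace ℝ (Fin d)) → ℝ := fun y => Ωs y - ‖y‖ ^ 2 / 2 with hgdef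
  have hif : Integrable f μ₀ := hiΩ.sub (hm₀.div_const 2)
  have hig : Integrable g ν₁ := hiΩs.sub (hm₁.div_const 2)
  set A : ℝ := ∫ x, f x ∂μ₀ with hAdef
  set B : ℝ := ∫ y, g y ∂ν₁ with hBdef
  set T : (EuclideanSpace ℝ (Fin d)) × (EuclideanSpace ℝ (Fin d)) → (EuclideanSpace ℝ (Fin d)) × (EuclideanSpace ℝ (Fin d)) := Prod.map id (gradient Ω) with hTdef
  set S : (EuclideanSpace ℝ (Fin d)) × (EuclideanSpace ℝ (Fin d)) → (EuclideanSpace ℝ (Fin d)) × (EuclideanSpace ℝ (Fin d)) := Prod.map id (gradient Ωs) with hSdef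
  have hTm : Measurable T := measurable_id.prodMap hG
  have hSm : Measurable S := measurable_id.prodMap hGs
  -- key lemma: pushing a coupling of (μ₀, μ₁) forward by (id, ∇Ω)
  have key : ∀ π ∈ Couplings μ₀ μ₁,
      (π.map T ∈ Couplings μ₀ ν₁) ∧
      ∫ p, breg Ω p.1 p.2 ∂π
        = (∫ p, (1 : ℝ) / 2 * ‖p.1 - p.2‖ ^ 2 ∂(π.map T)) + (A + B) := by
    intro π hπ
    obtain ⟨h1, h2⟩ := hπ
    have hae1 : ∀ᵐ p ∂π, p.1 ∈ X := by
      rw [ae_iff]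
      have : π (Prod.fst ⁻¹' Xᶜ) = 0 := by
        rw [← Measure.map_apply measurable_fst hXm.compl, h1]; exact hμ₀
      simpa [Set.preimage] using this
    have hae2 : ∀ᵐ p ∂π, p.2 ∈ X := by
      rw [ae_iff]
      have : π (Prod.snd ⁻¹' Xᶜ) = 0 := by
        rw [← Measure.map_apply measurable_snd hXm.compl, h2]; exact hμ₁
      simpa [Set.preimage] using this
    -- pointwise identity
    have hpt : ∀ᵐ p ∂π, breg Ω p.1 p.2
        = 1 / 2 * ‖p.1 - gradient Ω p.2‖ ^ 2 + f p.1 + g (gradient Ω p.2) := by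
      filter_upwards [hae1, hae2] with p hp1 hp2
      have hF := hFen p.2 hp2
      have e1 : ⟪gradient Ω p.2, p.1 - p.2⟫
          = ⟪p.1, gradient Ω p.2⟫ - ⟪p.2, gradient Ω p.2⟫ := by
        rw [inner_sub_right, real_inner_comm (gradient Ω p.2) p.1,
          real_inner_comm (gradient Ω p.2) p.2]
      have e2 : ‖p.1 - gradient Ω p.2‖ ^ 2
          = ‖p.1‖ ^ 2 - 2 * ⟪p.1, gradient Ω p.2⟫ + ‖gradient Ω p.2‖ ^ 2 :=
        norm_sub_sq_real _ _
      simp only [breg, hfdef, hgdef]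
      rw [e1, e2]
      linarith
    -- the marginal ν₁ as a pushforward of π
    have hν₁π : ν₁ = π.map (gradient Ω ∘ Prod.snd) := by
      rw [hν₁def, ← h2, Measure.map_map hG measurable_snd]
    -- integrability of the three pieces
    have hmf : Integrable (fun p => f p.1) π := by
      have h := hif
      rw [← h1] at h
      simpa [Function.comp_def] using h.comp_measurable measurable_fst
    have hmg : Integrable (fun p => g (gradient Ω p.2)) π := by
      have h := hig
      rw [hν₁π] at h
      simpa [Function.comp_def] using h.comp_measurable (hG.comp measurable_snd)
    have hm0π : Integrable (fun p => ‖p.1‖ ^ 2) π := by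
      have h := hm₀
      rw [← h1] at h
      simpa [Function.comp_def] using h.comp_measurable measurable_fst
    have hm1π : Integrable (fun p => ‖gradient Ω p.2‖ ^ 2) π := by
      have h := hm₁
      rw [hν₁π] at h
      simpa [Function.comp_def] using h.comp_measurable (hG.comp measurable_snd)
    have hquad : Integrable (fun p => 1 / 2 * ‖p.1 - gradient Ω p.2‖ ^ 2) π := by
      refine Integrable.mono' (hm0π.add hm1π) ?_ ?_
      · exact ((((measurable_fst.sub (hG.comp measurable_snd)).norm).pow_const
          2).const_mul (1 / 2)).aestronglyMeasurable
      · refine Filter.Eventually.of_forall fun p => ?_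
        rw [Real.norm_eq_abs, abs_of_nonneg (by positivity)]
        simp only [Pi.add_apply]
        nlinarith [norm_sub_le p.1 (gradient Ω p.2), norm_nonneg p.1,
          norm_nonneg (gradient Ω p.2), norm_nonneg (p.1 - gradient Ω p.2),
          sq_nonneg (‖p.1‖ - ‖gradient Ω p.2‖), sq_nonneg (‖p.1‖ + ‖gradient Ω p.2‖)]
    -- compute the integral
    have hint : ∫ p, breg Ω p.1 p.2 ∂π
        = (∫ p, 1 / 2 * ‖p.1 - gradient Ω p.2‖ ^ 2 ∂π)
          + (∫ p, f p.1 ∂π) + (∫ p, g (gradient Ω p.2) ∂π) := by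
      have hqf : Integrable (fun p : (EuclideanSpace ℝ (Fin d)) × (EuclideanSpace ℝ (Fin d)) =>
          1 / 2 * ‖p.1 - gradient Ω p.2‖ ^ 2 + f p.1) π := hquad.add hmf
      rw [integral_congr_ae hpt, integral_add hqf hmg, integral_add hquad hmf]
    have hintf : ∫ p, f p.1 ∂π = A := by
      rw [hAdef, ← h1, integral_map measurable_fst.aemeasurable
        (by rw [h1]; exact hif.aestronglyMeasurable)]
    have hintg : ∫ p, g (gradient Ω p.2) ∂π = B := by
      rw [hBdef, hν₁π, integral_map (hG.comp measurable_snd).aemeasurable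
        (by rw [← hν₁π]; exact hig.aestronglyMeasurable)]
      rfl
    have hq2 : ∫ p, (1 : ℝ) / 2 * ‖p.1 - p.2‖ ^ 2 ∂(π.map T)
        = ∫ p, 1 / 2 * ‖p.1 - gradient Ω p.2‖ ^ 2 ∂π := by
      rw [integral_map hTm.aemeasurable]
      · rfl
      · exact (by fun_prop :
          Continuous fun p : (EuclideanSpace ℝ (Fin d)) × (EuclideanSpace ℝ (Fin d)) => (1 : ℝ) / 2 * ‖p.1 - p.2‖ ^ 2).aestronglyMeasurable
    constructor
    · constructor
      · rw [Measure.map_map measurable_fst hTm]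
        have : Prod.fst ∘ T = Prod.fst := rfl
        rw [this, h1]
      · rw [Measure.map_map measurable_snd hTm]
        have : Prod.snd ∘ T = gradient Ω ∘ Prod.snd := rfl
        rw [this, ← hν₁π]
    · rw [hint, hintf, hintg, hq2]; ring
  -- a.e. statement: μ₁ lives on X
  have hae₁X : ∀ᵐ x ∂μ₁, x ∈ X := by
    rw [ae_iff]; exact hμ₁
  -- key2: pushing a coupling of (μ₀, ν₁) back by (id, ∇Ωs)
  have key2 : ∀ π' ∈ Couplings μ₀ ν₁,
      (π'.map S ∈ Couplings μ₀ μ₁) ∧ (π'.map S).map T = π' := by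
    intro π' hπ'
    obtain ⟨h1, h2⟩ := hπ'
    have hsetm : MeasurableSet {y : (EuclideanSpace ℝ (Fin d)) | gradient Ω (gradient Ωs y) = y} :=
      measurableSet_eq_fun (hG.comp hGs) measurable_id
    have hν : ∀ᵐ y ∂ν₁, gradient Ω (gradient Ωs y) = y := by
      rw [hν₁def, ae_map_iff hG.aemeasurable hsetm]
      filter_upwards [hae₁X] with x hx
      rw [hInv x hx]
    have hπae : ∀ᵐ p ∂π', gradient Ω (gradient Ωs p.2) = p.2 := by
      have := hν
      rw [← h2] at this
      exact (ae_map_iff measurable_snd.aemeasurable hsetm).mp this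
    have hmapback : (π'.map S).map T = π' := by
      rw [Measure.map_map hTm hSm]
      have : (π'.map (T ∘ S)) = π'.map id := by
        apply Measure.map_congr
        filter_upwards [hπae] with p hp
        exact Prod.ext rfl hp
      rw [this, Measure.map_id]
    refine ⟨⟨?_, ?_⟩, hmapback⟩
    · rw [Measure.map_map measurable_fst hSm]
      have : Prod.fst ∘ S = Prod.fst := rfl
      rw [this, h1]
    · rw [Measure.map_map measurable_snd hSm]
      have : Prod.snd ∘ S = gradient Ωs ∘ Prod.snd := rfl
      rw [this, ← Measure.map_map hGs measurable_snd, h2, hν₁def,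
        Measure.map_map hGs hG]
      have : μ₁.map (gradient Ωs ∘ gradient Ω) = μ₁.map id := by
        apply Measure.map_congr
        filter_upwards [hae₁X] with x hx
        exact hInv x hx
      rw [this, Measure.map_id]
  -- the two image sets correspond
  have hset_eq : ((fun π => ∫ p, breg Ω p.1 p.2 ∂π) '' Couplings μ₀ μ₁)
      = (fun t => t + (A + B)) ''
        ((fun π => ∫ p, (1 : ℝ) / 2 * ‖p.1 - p.2‖ ^ 2 ∂π) '' Couplings μ₀ ν₁) := by
    apply Set.Subset.antisymm
    · rintro _ ⟨π, hπ, rfl⟩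
      obtain ⟨hmem, heq⟩ := key π hπ
      exact ⟨_, ⟨_, hmem, rfl⟩, heq.symm⟩
    · rintro _ ⟨_, ⟨π', hπ', rfl⟩, rfl⟩
      obtain ⟨hmem, hcomp⟩ := key2 π' hπ'
      obtain ⟨_, heq⟩ := key _ hmem
      refine ⟨_, hmem, ?_⟩
      dsimp only
      rw [heq, hcomp]
  -- the full-cost image set
  set Tfull : Set ℝ := (fun π => ∫ p, ‖p.1 - p.2‖ ^ 2 ∂π) '' Couplings μ₀ ν₁ with hTfull
  have hprod : μ₀.prod ν₁ ∈ Couplings μ₀ ν₁ := by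
    constructor
    · rw [Measure.map_fst_prod]; simp
    · rw [Measure.map_snd_prod]; simp
  have hTfull_ne : Tfull.Nonempty := ⟨_, ⟨_, hprod, rfl⟩⟩
  have hTfull_bdd : BddBelow Tfull := by
    refine ⟨0, ?_⟩
    rintro _ ⟨π, hπ, rfl⟩
    exact integral_nonneg fun p => by positivity
  -- half-cost image = (1/2) • full-cost image
  have hhalf : ((fun π => ∫ p, (1 : ℝ) / 2 * ‖p.1 - p.2‖ ^ 2 ∂π) '' Couplings μ₀ ν₁)
      = (fun t => 1 / 2 * t) '' Tfull := by
    rw [hTfull, Set.image_image]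
    apply Set.image_congr'
    intro π
    exact integral_const_mul _ _
  have hsInf_half : sInf ((fun t => (1 : ℝ) / 2 * t) '' Tfull) = 1 / 2 * sInf Tfull := by
    have h1 : (fun t => (1 : ℝ) / 2 * t) '' Tfull = ((1 : ℝ) / 2) • Tfull := by
      rw [← Set.image_smul]; rfl
    rw [h1, Real.sInf_smul_of_nonneg (by norm_num), smul_eq_mul]
  -- sInf of a translated set
  have hhalf_ne : ((fun π => ∫ p, (1 : ℝ) / 2 * ‖p.1 - p.2‖ ^ 2 ∂π)
      '' Couplings μ₀ ν₁).Nonempty := ⟨_, ⟨_, hprod, rfl⟩⟩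
  have hhalf_bdd : BddBelow ((fun π => ∫ p, (1 : ℝ) / 2 * ‖p.1 - p.2‖ ^ 2 ∂π)
      '' Couplings μ₀ ν₁) := by
    refine ⟨0, ?_⟩
    rintro _ ⟨π, hπ, rfl⟩
    exact integral_nonneg fun p => by positivity
  have hsInf_add : ∀ (c : ℝ) (W : Set ℝ), W.Nonempty → BddBelow W →
      sInf ((fun t => t + c) '' W) = sInf W + c := by
    intro c W hne hbd
    obtain ⟨b, hb⟩ := hbd
    apply le_antisymm
    · have h1 : ∀ t ∈ W, sInf ((fun t => t + c) '' W) ≤ t + c := by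
        intro t ht
        exact csInf_le ⟨b + c, by rintro _ ⟨u, hu, rfl⟩; have := hb hu; dsimp; linarith⟩
          (Set.mem_image_of_mem _ ht)
      have h2 : sInf ((fun t => t + c) '' W) - c ≤ sInf W :=
        le_csInf hne fun t ht => by linarith [h1 t ht]
      linarith
    · apply le_csInf (hne.image _)
      rintro _ ⟨t, ht, rfl⟩
      have := csInf_le ⟨b, hb⟩ ht
      dsimp
      linarith
  calc transportCost (breg Ω) μ₀ μ₁
      = sInf ((fun t => t + (A + B)) ''
          ((fun π => ∫ p, (1 : ℝ) / 2 * ‖p.1 - p.2‖ ^ 2 ∂π) '' Couplings μ₀ ν₁)) := by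
        rw [transportCost, hset_eq]
    _ = sInf ((fun π => ∫ p, (1 : ℝ) / 2 * ‖p.1 - p.2‖ ^ 2 ∂π) '' Couplings μ₀ ν₁)
          + (A + B) := hsInf_add _ _ hhalf_ne hhalf_bdd
    _ = 1 / 2 * sInf Tfull + (A + B) := by rw [hhalf, hsInf_half]
    _ = (1 / 2) * transportCost (fun x y => ‖x - y‖ ^ 2) μ₀ ν₁ + A + B := by
        rw [transportCost]; ring
end
end

section
/- A function u : X → ℝ is c-convex for the Bregman cost c(x,y) = B_Ω(x,y) if and only if f = u + Ω can be written as f(x) = sup_{z ∈ Y} (⟨x, z⟩ - v(z)) for some function v : Y → ℝ; moreover in that case the c-gradient of u, when it exists, is T(x) = DΩ*(Df(x)). -/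
open scoped RealInnerProductSpace
noncomputable section

lemma isLUB_add_const {S : Set ℝ} {a c : ℝ} (h : IsLUB S a) :
    IsLUB ((· + c) '' S) (a + c) := by
  constructor
  · rintro r ⟨s, hs, rfl⟩
    exact (by show s + c ≤ a + c; linarith [h.1 hs])
  · intro b hb
    have hab : a ≤ b - c := by
      apply h.2
      intro s hs
      have h2 : s + c ≤ b := hb ⟨s, hs, rfl⟩
      linarith
    linarith

/-- `u` is c-convex for the Bregman cost `c(x,y) = B_Ω(x,y)` (i.e.
`u(x) = sup_{y ∈ X} (-c(x,y) - v(y))` for some `v`) iff `f = u + Ω` is of the form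
`f(x) = sup_{z ∈ Y} (⟪x, z⟫ - w(z))` for some `w : Y → ℝ`; moreover if `y` attains the
supremum at `x` and `u` has gradient `gu` at `x`, then the c-gradient is
`y = DΩ*(Df(x)) = DΩ*(gu + DΩ(x))`. -/
theorem bregman_c_convexity
    {d : ℕ} {X : Set (EuclideanSpace ℝ (Fin d))} {Ω Ωs : EuclideanSpace ℝ (Fin d) → ℝ}
    (hΩ : IsRegBregman X Ω)
    (hFen : ∀ x ∈ X, Ω x + Ωs (gradient Ω x) = ⟪x, gradient Ω x⟫)
    (hInv : ∀ x ∈ X, gradient Ωs (gradient Ω x) = x)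
    (u : EuclideanSpace ℝ (Fin d) → ℝ) :
    ((∃ v : EuclideanSpace ℝ (Fin d) → ℝ, ∀ x ∈ X,
        IsLUB {r : ℝ | ∃ y ∈ X, r = -(breg Ω x y) - v y} (u x)) ↔
      (∃ w : EuclideanSpace ℝ (Fin d) → ℝ, ∀ x ∈ X,
        IsLUB {r : ℝ | ∃ z ∈ gradient Ω '' X, r = ⟪x, z⟫ - w z} (u x + Ω x))) ∧
    (∀ v : EuclideanSpace ℝ (Fin d) → ℝ, ∀ x ∈ X, ∀ y ∈ X,
      ∀ gu : EuclideanSpace ℝ (Fin d),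
        (∀ x' ∈ X, -(breg Ω x' y) - v y ≤ u x') →
        u x = -(breg Ω x y) - v y →
        HasGradientAt u gu x →
        y = gradient Ωs (gu + gradient Ω x)) := by
  constructor
  · constructor
    · -- forward direction
      rintro ⟨v, hv⟩
      refine ⟨fun z => ⟪gradient Ωs z, z⟫ - Ω (gradient Ωs z) + v (gradient Ωs z),
        fun x hx => ?_⟩
      have hset : {r : ℝ | ∃ z ∈ gradient Ω '' X, r =
          ⟪x, z⟫ - (⟪gradient Ωs z, z⟫ - Ω (gradient Ωs z) + v (gradient Ωs z))} =
          (· + Ω x) '' {r : ℝ | ∃ y ∈ X, r = -(breg Ω x y) - v y} := by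
        ext r
        constructor
        · rintro ⟨z, ⟨y, hy, rfl⟩, rfl⟩
          refine ⟨-(breg Ω x y) - v y, ⟨y, hy, rfl⟩, ?_⟩
          rw [hInv y hy]
          simp only [breg, inner_sub_right]
          rw [real_inner_comm (gradient Ω y) x, real_inner_comm y (gradient Ω y)]
          ring
        · rintro ⟨r, ⟨y, hy, rfl⟩, rfl⟩
          refine ⟨gradient Ω y, ⟨y, hy, rfl⟩, ?_⟩
          rw [hInv y hy]
          simp only [breg, inner_sub_right]
          rw [real_inner_comm (gradient Ω y) x, real_inner_comm y (gradient Ω y)]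
          ring
      rw [hset]
      exact isLUB_add_const (hv x hx)
    · -- backward direction
      rintro ⟨w, hw⟩
      refine ⟨fun y => Ω y - ⟪y, gradient Ω y⟫ + w (gradient Ω y), fun x hx => ?_⟩
      have hset : {r : ℝ | ∃ y ∈ X, r =
          -(breg Ω x y) - (Ω y - ⟪y, gradient Ω y⟫ + w (gradient Ω y))} =
          (· + -Ω x) '' {r : ℝ | ∃ z ∈ gradient Ω '' X, r = ⟪x, z⟫ - w z} := by
        ext r
        constructor
        · rintro ⟨y, hy, rfl⟩
          refine ⟨⟪x, gradient Ω y⟫ - w (gradient Ω y), ⟨gradient Ω y, ⟨y, hy, rfl⟩, rfl⟩, ?_⟩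
          simp only [breg, inner_sub_right]
          rw [real_inner_comm (gradient Ω y) x, real_inner_comm y (gradient Ω y)]
          ring
        · rintro ⟨r, ⟨z, ⟨y, hy, rfl⟩, rfl⟩, rfl⟩
          refine ⟨y, hy, ?_⟩
          simp only [breg, inner_sub_right]
          rw [real_inner_comm (gradient Ω y) x, real_inner_comm y (gradient Ω y)]
          ring
      have := isLUB_add_const (c := -Ω x) (hw x hx)
      rw [hset]
      simpa using this
  · -- c-gradient formula
    intro v x hx y hy gu hub hmax hu
    -- Ω is differentiable at x
    have hΩdiff : DifferentiableAt ℝ Ω x :=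
      ((hΩ.smooth x hx).contDiffAt (hΩ.isOpen.mem_nhds hx)).differentiableAt (by simp)
    have hΩgrad : HasGradientAt Ω (gradient Ω x) x := hΩdiff.hasGradientAt
    set φ : EuclideanSpace ℝ (Fin d) → ℝ := fun x' => u x' + Ω x' - ⟪gradient Ω y, x'⟫ with hφ
    have hmin : IsLocalMin φ x := by
      have hmem : X ∈ nhds x := hΩ.isOpen.mem_nhds hx
      filter_upwards [hmem] with x' hx'
      have h1 := hub x' hx'
      simp only [hφ, breg, inner_sub_right] at h1 hmax ⊢
      linarith
    -- φ has derivative toDual (gu + ∇Ω x - ∇Ω y) at x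
    have hder : HasFDerivAt φ
        ((InnerProductSpace.toDual ℝ (EuclideanSpace ℝ (Fin d))) (gu + gradient Ω x - gradient Ω y)) x := by
      have h1 : HasFDerivAt u ((InnerProductSpace.toDual ℝ (EuclideanSpace ℝ (Fin d))) gu) x := hu.hasFDerivAt
      have h2 : HasFDerivAt Ω ((InnerProductSpace.toDual ℝ (EuclideanSpace ℝ (Fin d))) (gradient Ω x)) x :=
        hΩgrad.hasFDerivAt
      have h3 : HasFDerivAt (fun x' : EuclideanSpace ℝ (Fin d) => ⟪gradient Ω y, x'⟫)
          (((InnerProductSpace.toDual ℝ (EuclideanSpace ℝ (Fin d))) (gradient Ω y) : EuclideanSpace ℝ (Fin d) →L[ℝ] ℝ)) x := by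
        have := ((InnerProductSpace.toDual ℝ (EuclideanSpace ℝ (Fin d))) (gradient Ω y) : EuclideanSpace ℝ (Fin d) →L[ℝ] ℝ).hasFDerivAt
          (x := x)
        convert this using 2
        exact InnerProductSpace.toDual_apply_apply.symm
      have := (h1.add h2).sub h3
      rw [map_sub, map_add]
      exact this
    have hzero := hmin.hasFDerivAt_eq_zero hder
    have hzero' : gu + gradient Ω x - gradient Ω y = 0 := by
      have := congrArg (InnerProductSpace.toDual ℝ (EuclideanSpace ℝ (Fin d))).symm hzero
      simp only [LinearIsometryEquiv.symm_apply_apply, map_zero] at this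
      exact this
    have hgy : gu + gradient Ω x = gradient Ω y := sub_eq_zero.mp hzero'
    rw [hgy]
    exact (hInv y hy).symm
end
end
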